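/- arXiv:1305.6306 — 9 statements merged into one kernel-verified Lean document; each statement's English description precedes it below -/
import Mathlib

section
/- Let h ≥ 1 and h' ≥ 0, and let H be the complete bipartite graph with parts U = {u_1,…,u_h} and U' = {u'_1,…,u'_{h'}}. Let G be a connected bipartite simple graph with bipartition (V, V'), and for each vertex x of G let w_x : V(H) → ℚ≥0 be a weight function. Then the weighted homomorphism sum Z_H(G, W) = ∑_{σ ∈ Hom(G,H)} ∏_{x ∈ V(G)} w_x(σ(x)) satisfies Z_H(G, W) = ∏_{v ∈ V} (∑_{c=1}^{h} w_v(u_c)) · ∏_{v' ∈ V'} (∑_{c'=1}^{h'} w_{v'}(u'_{c'})) + ∏_{v' ∈ V'} (∑_{c=1}^{h} w_{v'}(u_c)) · ∏_{v ∈ V} (∑_{c'=1}^{h'} w_v(u'_{c'})). -/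
/-!
A map `σ : V(G) → U ⊕ U'` is a homomorphism to the complete bipartite graph exactly when the
side `(σ x).isLeft` changes along every edge of `G`, i.e. when `x ↦ (σ x).isLeft` is a proper
2-colouring of `G`. A connected bipartite graph has exactly two of these, the bipartition and
its swap, so the homomorphisms split into two disjoint families, each prescribing the side of
every vertex independently. The weighted sum over such a family factors into a product over
the vertices of per-vertex sums.
-/

namespace SimpleGraph

variable {α V W : Type*} {G : SimpleGraph α}

theorem completeBipartiteGraph_adj_iff_isLeft_ne {u v : V ⊕ W} :
    (completeBipartiteGraph V W).Adj u v ↔ u.isLeft ≠ v.isLeft := by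
  cases u <;> cases v <;> simp

theorem Preconnected.apply_eq_of_forall_adj {β : Type*} {f : α → β} (hG : G.Preconnected)
    (hf : ∀ a b, G.Adj a b → f a = f b) (a b : α) : f a = f b := by
  obtain ⟨p⟩ := hG a b
  induction p with
  | nil => rfl
  | cons hadj _ ih => exact (hf _ _ hadj).trans ih

theorem Connected.eq_or_eq_not_of_forall_adj_ne {f g : α → Bool} (hG : G.Connected)
    (hf : ∀ a b, G.Adj a b → f a ≠ f b) (hg : ∀ a b, G.Adj a b → g a ≠ g b) :
    f = g ∨ f = fun x => !g x := by
  have hxor (x y : α) : (f x ^^ g x) = (f y ^^ g y) :=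
    hG.preconnected.apply_eq_of_forall_adj (f := fun x => f x ^^ g x) (fun a b hab => by
      rw [Bool.eq_not_of_ne (hf a b hab).symm, Bool.eq_not_of_ne (hg a b hab).symm,
        Bool.not_xor_not]) x y
  obtain ⟨x₀⟩ := hG.nonempty
  cases h₀ : f x₀ ^^ g x₀
  · exact .inl <| funext fun x =>
      Bool.xor_left_inj.mp ((hxor x x₀).trans (h₀.trans (Bool.xor_self _).symm))
  · exact .inr <| funext fun x =>
      Bool.xor_left_inj.mp ((hxor x x₀).trans (h₀.trans (Bool.not_xor_self _).symm))

theorem Connected.forall_adj_completeBipartiteGraph_iff (hG : G.Connected) {c : α → Bool}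
    (hc : ∀ a b, G.Adj a b → c a ≠ c b) (σ : α → V ⊕ W) :
    (∀ a b, G.Adj a b → (completeBipartiteGraph V W).Adj (σ a) (σ b)) ↔
      (fun x => (σ x).isLeft) = c ∨ (fun x => (σ x).isLeft) = fun x => !c x := by
  simp only [completeBipartiteGraph_adj_iff_isLeft_ne]
  refine ⟨fun hσ => hG.eq_or_eq_not_of_forall_adj_ne hσ hc, ?_⟩
  rintro (hσ | hσ) a b hab <;> simp only [funext_iff] at hσ <;> simp [hσ, hc a b hab]

end SimpleGraph

namespace Fintype

variable {ι κ R : Type*} [Fintype ι] [CommSemiring R]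

theorem sum_ite_forall_eq_prod_sum [DecidableEq ι] [Fintype κ] (p : ι → κ → Prop)
    [∀ i, DecidablePred (p i)] (w : ι → κ → R) :
    ∑ σ : ι → κ, (if ∀ i, p i (σ i) then ∏ i, w i (σ i) else 0) =
      ∏ i, ∑ k, if p i k then w i k else 0 := by
  rw [Fintype.prod_sum]
  simp only [Fintype.prod_ite_zero]

theorem sum_ite_isLeft_eq {V W : Type*} [Fintype V] [Fintype W] (f : V ⊕ W → R) (b : Bool) :
    ∑ y, (if y.isLeft = b then f y else 0) =
      if b then ∑ v, f (.inl v) else ∑ w, f (.inr w) := by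
  cases b <;> simp [Fintype.sum_sum_type]

theorem prod_ite_mem_eq_prod_toFinset_mul (S : Set ι) [DecidablePred (· ∈ S)] (f g : ι → R) :
    ∏ i, (if i ∈ S then f i else g i) = (∏ i ∈ S.toFinset, f i) * ∏ i ∈ Sᶜ.toFinset, g i := by
  rw [Finset.prod_ite]
  congr 2 <;> ext <;> simp

end Fintype

open scoped Classical in
theorem stmt0_general (h h' : ℕ)
    {α : Type*} [Fintype α] (G : SimpleGraph α)
    (hconn : G.Connected)
    (S : Set α)
    (hbip : ∀ a b : α, G.Adj a b → (a ∈ S ↔ b ∉ S))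
    (w : α → (Fin h ⊕ Fin h') → NNRat) :
    ∑ σ : α → (Fin h ⊕ Fin h'),
        (if ∀ a b : α, G.Adj a b →
            (completeBipartiteGraph (Fin h) (Fin h')).Adj (σ a) (σ b)
         then ∏ x : α, w x (σ x) else 0)
      = (∏ v ∈ S.toFinset, ∑ c : Fin h, w v (Sum.inl c)) *
          (∏ v' ∈ Sᶜ.toFinset, ∑ c' : Fin h', w v' (Sum.inr c')) +
        (∏ v' ∈ Sᶜ.toFinset, ∑ c : Fin h, w v' (Sum.inl c)) *
          (∏ v ∈ S.toFinset, ∑ c' : Fin h', w v (Sum.inr c')) := by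
  set c : α → Bool := fun x => decide (x ∈ S)
  have hc : ∀ a b, G.Adj a b → c a ≠ c b := fun a b hab => by simp [c, hbip a b hab]
  have hsplit (σ : α → Fin h ⊕ Fin h') (P : NNRat) :
      (if ∀ a b, G.Adj a b → (completeBipartiteGraph (Fin h) (Fin h')).Adj (σ a) (σ b)
        then P else 0) =
      (if ∀ x, (σ x).isLeft = c x then P else 0) +
        (if ∀ x, (σ x).isLeft = !c x then P else 0) := by
    simp only [hconn.forall_adj_completeBipartiteGraph_iff hc, funext_iff]
    by_cases h₁ : ∀ x, (σ x).isLeft = c x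
    · obtain ⟨x₀⟩ := hconn.nonempty
      have h₂ : ¬ ∀ x, (σ x).isLeft = !c x := fun h₂ => by simpa [h₁] using h₂ x₀
      rw [if_pos (Or.inl h₁), if_pos h₁, if_neg h₂, add_zero]
    · rw [if_neg h₁, zero_add]
      exact if_congr (or_iff_right h₁) rfl rfl
  rw [Finset.sum_congr rfl fun σ _ => hsplit σ _, Finset.sum_add_distrib,
    Fintype.sum_ite_forall_eq_prod_sum (fun x y => y.isLeft = c x) w,
    Fintype.sum_ite_forall_eq_prod_sum (fun x y => y.isLeft = !c x) w]
  simp only [Fintype.sum_ite_isLeft_eq, c, decide_eq_true_eq, Bool.not_eq_true', decide_eq_false_iff_not, ite_not,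
    Fintype.prod_ite_mem_eq_prod_toFinset_mul]
  ring

open scoped Classical in
theorem stmt0 (h h' : ℕ) (hh : 1 ≤ h)
    {α : Type*} [Fintype α] (G : SimpleGraph α)
    (hconn : G.Connected)
    (S : Set α)
    (hbip : ∀ a b : α, G.Adj a b → (a ∈ S ↔ b ∉ S))
    (w : α → (Fin h ⊕ Fin h') → NNRat) :
    ∑ σ : α → (Fin h ⊕ Fin h'),
        (if ∀ a b : α, G.Adj a b →
            (completeBipartiteGraph (Fin h) (Fin h')).Adj (σ a) (σ b)
         then ∏ x : α, w x (σ x) else 0)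
      = (∏ v ∈ S.toFinset, ∑ c : Fin h, w v (Sum.inl c)) *
          (∏ v' ∈ Sᶜ.toFinset, ∑ c' : Fin h', w v' (Sum.inr c')) +
        (∏ v' ∈ Sᶜ.toFinset, ∑ c : Fin h, w v' (Sum.inl c)) *
          (∏ v ∈ S.toFinset, ∑ c' : Fin h', w v (Sum.inr c')) :=
  stmt0_general h h' G hconn S hbip w
end

section
/- Let G be a connected bipartite simple graph with at least one vertex, and let P_4 be the path with four vertices (and three edges). Then the number of homomorphisms from G to P_4 equals twice the number of independent sets of G. -/
/-!
Record a vertex `x` of `P₄` by its parity and by whether it is an endpoint (`0` or `3`).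
Two vertices are adjacent exactly when their parities differ and they are not both endpoints,
so a homomorphism `G → P₄` is the same as a proper 2-colouring of `G` together with an
independent set (the vertices sent to endpoints). A connected bipartite graph has exactly two
proper 2-colourings, since a colouring is determined by its value at one vertex.
-/

namespace SimpleGraph

noncomputable def pathFourEquiv : Fin 4 ≃ Bool × Bool :=
  Equiv.ofBijective (fun x => (decide (Even x.val), decide (x = 0 ∨ x = 3))) (by decide)

theorem pathGraph_four_adj_iff {x y : Fin 4} :
    (pathGraph 4).Adj x y ↔
      (pathFourEquiv x).1 ≠ (pathFourEquiv y).1 ∧ ¬((pathFourEquiv x).2 ∧ (pathFourEquiv y).2) := by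
  rw [pathGraph_adj]
  revert x y
  decide

variable {α : Type*} {G : SimpleGraph α}

noncomputable def pathGraphFourHomEquiv :
    {σ : α → Fin 4 // ∀ a b, G.Adj a b → (pathGraph 4).Adj (σ a) (σ b)} ≃
      {c : α → Bool // ∀ a b, G.Adj a b → c a ≠ c b} ×
        {t : α → Bool // ∀ a b, G.Adj a b → ¬(t a ∧ t b)} :=
  (Equiv.subtypeEquiv ((Equiv.arrowCongr (.refl α) pathFourEquiv).trans
      (Equiv.arrowProdEquivProdArrow α (fun _ => Bool) (fun _ => Bool)))
    (fun σ => by simp [pathGraph_four_adj_iff, forall_and])).trans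
    Equiv.subtypeProdEquivProd

noncomputable def independentIndicatorEquiv :
    {t : α → Bool // ∀ a b, G.Adj a b → ¬(t a ∧ t b)} ≃
      {s : Set α // ∀ a ∈ s, ∀ b ∈ s, ¬ G.Adj a b} :=
  Equiv.subtypeEquiv (Equiv.arrowCongr (.refl α) Equiv.propEquivBool.symm : (α → Bool) ≃ Set α)
    (fun t => by
      change _ ↔ ∀ a, t a = true → ∀ b, t b = true → ¬ G.Adj a b
      grind)

theorem Coloring.apply_eq_of_reachable (c c' : G.Coloring Bool) {u v : α}
    (huv : G.Reachable u v) (hu : c u = c' u) : c v = c' v := by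
  obtain ⟨p⟩ := huv
  have h := (c.even_length_iff_congr p).symm.trans (c'.even_length_iff_congr p)
  rw [hu] at h
  rw [Bool.eq_iff_iff]
  tauto

theorem natCard_properBoolColorings_of_connected (hconn : G.Connected) (hbip : G.Colorable 2) :
    Nat.card {c : α → Bool // ∀ a b, G.Adj a b → c a ≠ c b} = 2 := by
  obtain ⟨v₀⟩ := hconn.nonempty
  obtain ⟨c₀⟩ := hbip
  let c : α → Bool := fun v => finTwoEquiv (c₀ v)
  have hc : ∀ a b, G.Adj a b → c a ≠ c b :=
    fun a b hab h => c₀.valid hab (finTwoEquiv.injective h)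
  refine (Nat.card_eq_of_bijective (fun d => d.1 v₀) ⟨fun d d' h => ?_, fun b => ?_⟩).trans
    (by simp)
  · ext v
    exact Coloring.apply_eq_of_reachable (Coloring.mk d.1 (d.2 _ _))
      (Coloring.mk d'.1 (d'.2 _ _)) (hconn.preconnected v₀ v) h
  · by_cases hb : c v₀ = b
    · exact ⟨⟨c, hc⟩, hb⟩
    · refine ⟨⟨fun v => !c v, fun a b hab => by simpa using hc a b hab⟩, ?_⟩
      simpa [Bool.eq_not] using hb

end SimpleGraph

open scoped Classical in
theorem stmt1 {α : Type*} [Fintype α] (G : SimpleGraph α)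
    (hconn : G.Connected) (hbip : G.Colorable 2) :
    Fintype.card {σ : α → Fin 4 //
        ∀ a b : α, G.Adj a b → (SimpleGraph.pathGraph 4).Adj (σ a) (σ b)}
      = 2 * Fintype.card {s : Set α // ∀ a ∈ s, ∀ b ∈ s, ¬ G.Adj a b} := by
  simp only [← Nat.card_eq_fintype_card]
  rw [Nat.card_congr SimpleGraph.pathGraphFourHomEquiv, Nat.card_prod,
    SimpleGraph.natCard_properBoolColorings_of_connected hconn hbip,
    Nat.card_congr SimpleGraph.independentIndicatorEquiv]
end

section
/- Let H be a finite tree with at least one edge that contains no induced subgraph isomorphic to J_3, and let (U, U') be its bipartition with |U| = h and |U'| = h'. Then there exist bijections π : U → {1,…,h} and π' : U' → {1,…,h'} and monotonically non-decreasing functions m, M : {1,…,h} → {1,…,h'} and m', M' : {1,…,h'} → {1,…,h} such that: for every u ∈ U with π(u) = i, the set {π'(u') : u' a neighbour of u} equals {ℓ : m(i) ≤ ℓ ≤ M(i)}; and for every u' ∈ U' with π'(u') = i, the set {π(u) : u a neighbour of u'} equals {ℓ : m'(i) ≤ ℓ ≤ M'(i)}. -/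
/-!
A longest path `P` of a `J₃`-free tree is a spine: every vertex off `P` is a leaf hanging on a
vertex of `P`. Indeed, if an off-path vertex `u` is adjacent to `P.getVert j` and to another
off-path vertex `w`, then `w, u, P.getVert j, …` is longer than `P` unless `2 ≤ j` and
`j + 2 ≤ P.length`, and in that case `P.getVert (j - 2), …, P.getVert (j + 2), u, w` span a `J₃`,
which is induced because the tree has no cycles.

Give every vertex the position on `P` of its spine vertex and order each colour class by position.
A spine vertex at position `j` is adjacent to exactly the vertices of the other class at positions
`j - 1, j, j + 1`, and a leaf at position `j` to exactly the one at position `j`. These windows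
move monotonically with the position, so every neighbourhood is an interval of the other class,
with monotone endpoints.
-/

/-- The vertex set of the tree `J_q`: a centre `w`, leaves `c i`, and
middle vertices `c' i` for `i ∈ [q]`. -/
inductive JVert (q : ℕ) : Type
  | w : JVert q
  | c (i : Fin q) : JVert q
  | c' (i : Fin q) : JVert q

/-- The tree `J_q`, with edges `(c i, c' i)` and `(c' i, w)` for `i ∈ [q]`. -/
def Jgraph (q : ℕ) : SimpleGraph (JVert q) :=
  SimpleGraph.fromRel (fun a b =>
    (∃ i, a = JVert.c i ∧ b = JVert.c' i) ∨ (∃ i, a = JVert.c' i ∧ b = JVert.w))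

theorem exists_monotone_forall_le_iff {ι β γ : Type*} [Preorder ι] [LinearOrder β] [Finite β]
    [Preorder γ] {f : β → γ} (hf : Monotone f) {g : ι → γ} (hg : Monotone g)
    (hex : ∀ i, ∃ b, g i ≤ f b) : ∃ m : ι → β, Monotone m ∧ ∀ i b, m i ≤ b ↔ g i ≤ f b := by
  have hleast : ∀ i, ∃ b₀, ∀ b, b₀ ≤ b ↔ g i ≤ f b := fun i ↦ by
    obtain ⟨b₀, hb₀, hmin⟩ := (Set.toFinite {b | g i ≤ f b}).exists_minimal (hex i)
    exact ⟨b₀, fun b ↦ ⟨fun h ↦ hb₀.trans (hf h),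
      fun h ↦ le_of_not_gt fun hlt ↦ hlt.not_ge (hmin h hlt.le)⟩⟩
  choose m hm using hleast
  exact ⟨m, fun i j hij ↦ (hm i (m j)).2 ((hg hij).trans ((hm j (m j)).1 le_rfl)), hm⟩

theorem exists_monotone_forall_le_and_le_iff {ι β γ : Type*} [Preorder ι] [LinearOrder β]
    [Finite β] [Preorder γ] {f : β → γ} (hf : Monotone f) {lo hi : ι → γ} (hlo : Monotone lo)
    (hhi : Monotone hi) (hex : ∀ i, ∃ b, lo i ≤ f b ∧ f b ≤ hi i) :
    ∃ m M : ι → β, Monotone m ∧ Monotone M ∧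
      ∀ i b, lo i ≤ f b ∧ f b ≤ hi i ↔ m i ≤ b ∧ b ≤ M i := by
  obtain ⟨m, hm, hm_iff⟩ :=
    exists_monotone_forall_le_iff hf hlo fun i ↦ (hex i).imp fun _ ↦ And.left
  -- the upper endpoints are the lower endpoints for the order duals
  obtain ⟨M, hM, hM_iff⟩ := exists_monotone_forall_le_iff (ι := ιᵒᵈ) (β := βᵒᵈ) (γ := γᵒᵈ)
    hf.dual (g := hi) hhi.dual fun i ↦ (hex i).imp fun _ ↦ And.right
  exact ⟨m, M, hm, hM.dual, fun i b ↦ and_congr (hm_iff i b).symm (hM_iff i b).symm⟩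

theorem exists_equiv_fin_monotone {β γ : Type*} [Finite β] [LinearOrder γ] (k : β → γ) {n : ℕ}
    (hn : Nat.card β = n) : ∃ e : β ≃ Fin n, Monotone (k ∘ e.symm) := by
  obtain ⟨e₀⟩ := Finite.card_eq.mp (hn.trans (Nat.card_fin n).symm)
  refine ⟨e₀.trans (Tuple.sort (k ∘ e₀.symm)).symm, ?_⟩
  simpa [Function.comp_def] using Tuple.monotone_sort (k ∘ e₀.symm)

namespace SimpleGraph

variable {α β : Type*} {G : SimpleGraph β} {H : SimpleGraph α}

theorem IsAcyclic.adj_of_injective_hom (hH : H.IsAcyclic) (f : G →g H)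
    (hf : Function.Injective f) {a b : β} (hab : G.Reachable a b) (h : H.Adj (f a) (f b)) :
    G.Adj a b := by
  obtain ⟨p, hp⟩ := hab.exists_isPath
  have := congrArg (fun q : H.Path (f a) (f b) ↦ q.1.length)
    ((hH.subsingleton_path _ _).elim ⟨p.map f, hp.map hf⟩ (Path.singleton h))
  exact Walk.adj_of_length_eq_one (by simpa using this)

theorem IsAcyclic.exists_induce_iso_of_injective_hom (hH : H.IsAcyclic) (hG : G.Connected)
    (f : G →g H) (hf : Function.Injective f) : ∃ s : Set α, Nonempty (H.induce s ≃g G) :=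
  ⟨Set.range f, ⟨Iso.symm
    { toEquiv := Equiv.ofInjective f hf
      map_rel_iff' := fun {a b} ↦ ⟨hH.adj_of_injective_hom f hf (hG a b), f.map_adj⟩ }⟩⟩

section Path

variable {x y : α} {P : H.Walk x y} {i j : ℕ}

theorem Walk.getVert_mem_support_drop (P : H.Walk x y) (hij : i ≤ j) :
    P.getVert j ∈ (P.drop i).support := by
  simpa [Walk.drop_getVert, Nat.add_sub_cancel' hij] using (P.drop i).getVert_mem_support (j - i)

theorem IsAcyclic.adj_getVert_iff (hH : H.IsAcyclic) (hP : P.IsPath) (hi : i ≤ P.length)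
    (hj : j ≤ P.length) : H.Adj (P.getVert i) (P.getVert j) ↔ i + 1 = j ∨ j + 1 = i := by
  refine ⟨fun h ↦ ?_, ?_⟩
  · wlog hij : i ≤ j generalizing i j
    · exact (this hj hi h.symm (le_of_not_ge hij)).symm
    have hne : i ≠ j := fun hij ↦ h.ne (congrArg P.getVert hij)
    have hsnd := hH.eq_snd_of_adj_start (hP.drop i) h (P.getVert_mem_support_drop hij)
    rw [Walk.snd, Walk.drop_getVert] at hsnd
    exact .inl (hP.getVert_injOn (by simp; omega) (by simpa using hj) hsnd.symm)
  · rintro (rfl | rfl)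
    · exact P.adj_getVert_succ (by omega)
    · exact (P.adj_getVert_succ (by omega)).symm

theorem IsAcyclic.eq_of_adj_getVert (hH : H.IsAcyclic) (hP : P.IsPath) {u : α}
    (hu : u ∉ P.support) (hi : i ≤ P.length) (hj : j ≤ P.length)
    (hui : H.Adj u (P.getVert i)) (huj : H.Adj u (P.getVert j)) : i = j := by
  wlog hij : i ≤ j generalizing i j
  · exact (this hj hi huj hui (le_of_not_ge hij)).symm
  have hQ : (Walk.cons hui (P.drop i)).IsPath :=
    (hP.drop i).cons fun h ↦ hu (List.mem_of_mem_drop (P.drop_support_eq_support_drop_min i ▸ h))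
  have hsnd := hH.eq_snd_of_adj_start hQ huj
    (List.mem_cons_of_mem _ (P.getVert_mem_support_drop hij))
  exact (hP.getVert_injOn hj hi (by simpa using hsnd)).symm

def Walk.IsLongestPath (P : H.Walk x y) : Prop :=
  P.IsPath ∧ ∀ (a b : α) (Q : H.Walk a b), Q.IsPath → Q.length ≤ P.length

theorem exists_isLongestPath [Finite α] [Nonempty α] (H : SimpleGraph α) :
    ∃ (x y : α) (P : H.Walk x y), P.IsLongestPath :=
  let ⟨x, y, P, hP, hmax⟩ := Walk.exists_isPath_forall_isPath_length_le_length H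
  ⟨x, y, P, hP, fun a b Q hQ ↦ hmax a b Q hQ⟩

theorem Walk.IsLongestPath.reverse (hP : P.IsLongestPath) : P.reverse.IsLongestPath :=
  ⟨hP.1.reverse, by simpa using hP.2⟩

theorem Walk.IsLongestPath.two_le_of_adj (hP : P.IsLongestPath) {u w : α} (hu : u ∉ P.support)
    (hw : w ∉ P.support) (hju : H.Adj (P.getVert j) u) (huw : H.Adj u w) : 2 ≤ j := by
  have hdrop : ∀ {v}, v ∉ P.support → v ∉ (P.drop j).support :=
    fun hv h ↦ hv (List.mem_of_mem_drop (P.drop_support_eq_support_drop_min j ▸ h))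
  have hQ : (Walk.cons huw.symm (Walk.cons hju.symm (P.drop j))).IsPath :=
    ((hP.1.drop j).cons (hdrop hu)).cons (by simpa [huw.ne'] using hdrop hw)
  have := hP.2 _ _ _ hQ
  simp only [Walk.length_cons, Walk.drop_length] at this
  omega

end Path

theorem Jgraph_connected (q : ℕ) : (Jgraph q).Connected := by
  have hadj : ∀ i, (Jgraph q).Adj (.c i) (.c' i) ∧ (Jgraph q).Adj (.c' i) .w := fun i ↦
    ⟨by simp [Jgraph], by simp [Jgraph]⟩
  have hw : ∀ v, (Jgraph q).Reachable v .w := by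
    rintro (_ | i | i)
    · rfl
    · exact (hadj i).1.reachable.trans (hadj i).2.reachable
    · exact (hadj i).2.reachable
  exact connected_iff _ |>.mpr ⟨fun a b ↦ (hw a).trans (hw b).symm, ⟨.w⟩⟩

theorem exists_induce_iso_Jgraph_three {x y : α} {P : H.Walk x y} {j : ℕ} (hH : H.IsAcyclic)
    (hP : P.IsPath) (hj : 2 ≤ j) (hjP : j + 2 ≤ P.length) {u w : α} (hu : u ∉ P.support)
    (hw : w ∉ P.support) (hju : H.Adj (P.getVert j) u) (huw : H.Adj u w) :
    ∃ s : Set α, Nonempty (H.induce s ≃g Jgraph 3) := by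
  let f : JVert 3 → α
    | .w => P.getVert j
    | .c' i => ![P.getVert (j - 1), P.getVert (j + 1), u] i
    | .c i => ![P.getVert (j - 2), P.getVert (j + 2), w] i
  have hP_inj : ∀ a b, a ≤ P.length → b ≤ P.length → P.getVert a = P.getVert b → a = b :=
    fun a b ha hb h ↦ hP.getVert_injOn ha hb h
  have hPu : ∀ a, P.getVert a ≠ u := fun a h ↦ hu (h ▸ P.getVert_mem_support a)
  have hPw : ∀ a, P.getVert a ≠ w := fun a h ↦ hw (h ▸ P.getVert_mem_support a)
  have hf : Function.Injective f := by
    intro a b hab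
    rcases a with _ | i | i <;> rcases b with _ | k | k <;> (try fin_cases i) <;>
      (try fin_cases k) <;> simp [f] at hab ⊢ <;>
      first
        | exact absurd (hP_inj _ _ (by omega) (by omega) hab) (by omega)
        | exact hPu _ hab | exact hPu _ hab.symm | exact hPw _ hab | exact hPw _ hab.symm
        | exact huw.ne hab | exact huw.ne hab.symm
  have hstep : ∀ a b, a + 1 = b → b ≤ P.length → H.Adj (P.getVert a) (P.getVert b) := by
    rintro a _ rfl hb
    exact P.adj_getVert_succ hb
  refine hH.exists_induce_iso_of_injective_hom (Jgraph_connected 3) ⟨f, fun {a b} hab ↦ ?_⟩ hf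
  simp only [Jgraph, fromRel_adj] at hab
  obtain ⟨-, (⟨i, rfl, rfl⟩ | ⟨i, rfl, rfl⟩) | (⟨i, rfl, rfl⟩ | ⟨i, rfl, rfl⟩)⟩ := hab <;>
    fin_cases i <;> simp [f] <;>
    first
      | exact hstep _ _ (by omega) (by omega)
      | exact (hstep _ _ (by omega) (by omega)).symm
      | exact hju | exact hju.symm | exact huw | exact huw.symm

section Caterpillar

variable {x y : α} {P : H.Walk x y} {j : ℕ}

theorem Walk.IsLongestPath.not_adj_of_adj_getVert (hT : H.IsTree)
    (hJ3 : ¬ ∃ s : Set α, Nonempty (H.induce s ≃g Jgraph 3)) (hP : P.IsLongestPath) {u w : α}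
    (hu : u ∉ P.support) (hw : w ∉ P.support) (hj : j ≤ P.length)
    (hju : H.Adj (P.getVert j) u) : ¬ H.Adj u w := by
  intro huw
  have h₁ := hP.two_le_of_adj hu hw hju huw
  have h₂ := hP.reverse.two_le_of_adj (j := P.length - j) (by simpa using hu) (by simpa using hw)
    (by rwa [Walk.getVert_reverse, Nat.sub_sub_self hj]) huw
  exact hJ3 (exists_induce_iso_Jgraph_three hT.isAcyclic hP.1 h₁ (by omega) hu hw hju huw)

theorem Walk.IsLongestPath.exists_forall_adj_iff_eq_getVert (hT : H.IsTree)
    (hJ3 : ¬ ∃ s : Set α, Nonempty (H.induce s ≃g Jgraph 3)) (hP : P.IsLongestPath) {a : α}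
    (ha : a ∉ P.support) : ∃ j ≤ P.length, ∀ b, H.Adj a b ↔ b = P.getVert j := by
  obtain ⟨Q⟩ := hT.connected.preconnected a x
  induction Q with
  | nil => exact absurd P.start_mem_support ha
  | @cons a b _ hab Q ih =>
    by_cases hb : b ∈ P.support
    · obtain ⟨n, rfl, hn⟩ := Walk.mem_support_iff_exists_getVert.mp hb
      refine ⟨n, hn, fun d ↦ ⟨fun had ↦ ?_, fun hd ↦ hd ▸ hab⟩⟩
      by_cases hd : d ∈ P.support
      · obtain ⟨m, rfl, hm⟩ := Walk.mem_support_iff_exists_getVert.mp hd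
        rw [hT.isAcyclic.eq_of_adj_getVert hP.1 ha hm hn had hab]
      · exact absurd had (hP.not_adj_of_adj_getVert hT hJ3 ha hd hn hab.symm)
    · obtain ⟨j, -, hbj⟩ := ih hP hb
      exact absurd ((hbj a).1 hab.symm ▸ P.getVert_mem_support j) ha

end Caterpillar

/-- The spine is ordered by `pos`, and every vertex off the spine is a leaf hanging on the spine
vertex with the same `pos`. -/
structure CaterpillarSpine (H : SimpleGraph α) where
  spine : Set α
  pos : α → ℕ
  injOn_pos : Set.InjOn pos spine
  exists_mem_spine : ∀ a, ∃ p ∈ spine, pos p = pos a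
  adj_iff_of_mem_spine :
    ∀ a ∈ spine, ∀ b ∈ spine, H.Adj a b ↔ pos a + 1 = pos b ∨ pos b + 1 = pos a
  adj_iff_of_notMem_spine : ∀ a ∉ spine, ∀ b, H.Adj a b ↔ b ∈ spine ∧ pos b = pos a

theorem nonempty_caterpillarSpine [Finite α] (hT : H.IsTree)
    (hJ3 : ¬ ∃ s : Set α, Nonempty (H.induce s ≃g Jgraph 3)) : Nonempty H.CaterpillarSpine := by
  have := hT.connected.nonempty
  obtain ⟨x, y, P, hP⟩ := exists_isLongestPath H
  have hpos : ∀ a, ∃ j ≤ P.length, (a ∈ P.support → P.getVert j = a) ∧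
      (a ∉ P.support → ∀ b, H.Adj a b ↔ b = P.getVert j) := by
    intro a
    by_cases ha : a ∈ P.support
    · obtain ⟨j, hj, hjP⟩ := Walk.mem_support_iff_exists_getVert.mp ha
      exact ⟨j, hjP, fun _ ↦ hj, fun h ↦ absurd ha h⟩
    · obtain ⟨j, hjP, hadj⟩ := hP.exists_forall_adj_iff_eq_getVert hT hJ3 ha
      exact ⟨j, hjP, fun h ↦ absurd h ha, fun _ ↦ hadj⟩
  choose pos hle hspine hleaf using hpos
  have pos_getVert : ∀ j ≤ P.length, pos (P.getVert j) = j := fun j hj ↦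
    hP.1.getVert_injOn (hle _) hj (hspine _ (P.getVert_mem_support j))
  refine ⟨⟨{a | a ∈ P.support}, pos, ?_, ?_, ?_, ?_⟩⟩
  · intro a ha b hb h
    rw [← hspine a ha, ← hspine b hb, h]
  · exact fun a ↦ ⟨P.getVert (pos a), P.getVert_mem_support _, pos_getVert _ (hle a)⟩
  · intro a ha b hb
    have := hT.isAcyclic.adj_getVert_iff hP.1 (hle a) (hle b)
    rwa [hspine a ha, hspine b hb] at this
  · intro a ha b
    rw [hleaf a ha b]
    refine ⟨?_, fun ⟨hb, hab⟩ ↦ by rw [← hspine b hb, hab]⟩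
    rintro rfl
    exact ⟨P.getVert_mem_support _, pos_getVert _ (hle a)⟩

namespace CaterpillarSpine

variable (C : H.CaterpillarSpine)

open Classical in
noncomputable def lo (a : α) : ℕ := if a ∈ C.spine then C.pos a - 1 else C.pos a

open Classical in
noncomputable def hi (a : α) : ℕ := if a ∈ C.spine then C.pos a + 1 else C.pos a

variable {C} {S T : Set α}

theorem mem_spine_iff_of_pos_eq (hST : IsCompl S T) (hbip : ∀ a b, H.Adj a b → (a ∈ S ↔ b ∈ T))
    {a b : α} (ha : a ∈ S) (hb : b ∈ S) (h : C.pos a = C.pos b) :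
    a ∈ C.spine ↔ b ∈ C.spine := by
  by_contra hne
  have hab : H.Adj a b := by
    by_cases has : a ∈ C.spine
    · exact ((C.adj_iff_of_notMem_spine b (by tauto) a).2 ⟨has, h⟩).symm
    · exact (C.adj_iff_of_notMem_spine a has b).2 ⟨by tauto, h.symm⟩
  exact Set.disjoint_left.mp hST.disjoint hb ((hbip a b hab).1 ha)

theorem lo_le_lo (hST : IsCompl S T) (hbip : ∀ a b, H.Adj a b → (a ∈ S ↔ b ∈ T)) {a b : α}
    (ha : a ∈ S) (hb : b ∈ S) (h : C.pos a ≤ C.pos b) : C.lo a ≤ C.lo b := by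
  rcases h.lt_or_eq with h | h
  · unfold lo; split_ifs <;> omega
  · have := mem_spine_iff_of_pos_eq hST hbip ha hb h
    unfold lo; split_ifs <;> first | omega | tauto

theorem hi_le_hi (hST : IsCompl S T) (hbip : ∀ a b, H.Adj a b → (a ∈ S ↔ b ∈ T)) {a b : α}
    (ha : a ∈ S) (hb : b ∈ S) (h : C.pos a ≤ C.pos b) : C.hi a ≤ C.hi b := by
  rcases h.lt_or_eq with h | h
  · unfold hi; split_ifs <;> omega
  · have := mem_spine_iff_of_pos_eq hST hbip ha hb h
    unfold hi; split_ifs <;> first | omega | tauto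

theorem adj_iff_lo_le_and_le_hi (hST : IsCompl S T)
    (hbip : ∀ a b, H.Adj a b → (a ∈ S ↔ b ∈ T)) {a b : α} (ha : a ∈ S) (hb : b ∈ T) :
    H.Adj a b ↔ C.lo a ≤ C.pos b ∧ C.pos b ≤ C.hi a := by
  have hcommon : ∀ p, H.Adj p a → ¬ H.Adj p b := fun p hpa hpb ↦
    Set.disjoint_left.mp hST.disjoint ha ((hbip p a hpa).1 ((hbip p b hpb).2 hb))
  have hab : a ≠ b := fun h ↦ Set.disjoint_left.mp hST.disjoint ha (h ▸ hb)
  by_cases has : a ∈ C.spine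
  · simp only [lo, hi, has, if_true]
    by_cases hbs : b ∈ C.spine
    · rw [C.adj_iff_of_mem_spine a has b hbs]
      have : C.pos a ≠ C.pos b := fun h ↦ hab (C.injOn_pos has hbs h)
      omega
    · rw [H.adj_comm, C.adj_iff_of_notMem_spine b hbs a]
      refine ⟨fun h ↦ by omega, fun h ↦ ⟨has, ?_⟩⟩
      by_contra hne
      obtain ⟨p, hp, hpb⟩ := C.exists_mem_spine b
      exact hcommon p (by rw [C.adj_iff_of_mem_spine p hp a has]; omega)
        ((C.adj_iff_of_notMem_spine b hbs p).2 ⟨hp, hpb⟩).symm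
  · simp only [lo, hi, has, if_false, C.adj_iff_of_notMem_spine a has b]
    refine ⟨fun h ↦ by omega, fun h ↦ ⟨?_, by omega⟩⟩
    by_contra hbs
    obtain ⟨p, hp, hpa⟩ := C.exists_mem_spine a
    exact hcommon p ((C.adj_iff_of_notMem_spine a has p).2 ⟨hp, hpa⟩).symm
      ((C.adj_iff_of_notMem_spine b hbs p).2 ⟨hp, by omega⟩).symm

theorem exists_monotone_nbhd_bounds (hST : IsCompl S T)
    (hbip : ∀ a b, H.Adj a b → (a ∈ S ↔ b ∈ T)) (hnbr : ∀ a, ∃ b, H.Adj a b) {n n' : ℕ}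
    (π : S ≃ Fin n) (π' : T ≃ Fin n') (hπ : Monotone fun i ↦ C.pos (π.symm i))
    (hπ' : Monotone fun i ↦ C.pos (π'.symm i)) :
    ∃ m M : Fin n → Fin n', Monotone m ∧ Monotone M ∧
      ∀ (u : S) (ℓ : Fin n'), (∃ u' : T, H.Adj u u' ∧ π' u' = ℓ) ↔ m (π u) ≤ ℓ ∧ ℓ ≤ M (π u) := by
  have hadj : ∀ i ℓ, H.Adj (π.symm i) (π'.symm ℓ) ↔
      C.lo (π.symm i) ≤ C.pos (π'.symm ℓ) ∧ C.pos (π'.symm ℓ) ≤ C.hi (π.symm i) :=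
    fun i ℓ ↦ adj_iff_lo_le_and_le_hi hST hbip (π.symm i).2 (π'.symm ℓ).2
  have hex : ∀ i, ∃ ℓ, C.lo (π.symm i) ≤ C.pos (π'.symm ℓ) ∧
      C.pos (π'.symm ℓ) ≤ C.hi (π.symm i) := fun i ↦ by
    obtain ⟨b, hb⟩ := hnbr (π.symm i)
    exact ⟨π' ⟨b, (hbip _ _ hb).1 (π.symm i).2⟩, (hadj _ _).1 (by simpa using hb)⟩
  obtain ⟨m, M, hm, hM, hmM⟩ := exists_monotone_forall_le_and_le_iff hπ'
    (fun i j hij ↦ lo_le_lo hST hbip (π.symm i).2 (π.symm j).2 (hπ hij))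
    (fun i j hij ↦ hi_le_hi hST hbip (π.symm i).2 (π.symm j).2 (hπ hij)) hex
  refine ⟨m, M, hm, hM, fun u ℓ ↦ ?_⟩
  rw [← hmM, ← hadj, π.symm_apply_apply]
  exact ⟨fun ⟨u', h, hℓ⟩ ↦ hℓ ▸ by simpa using h, fun h ↦ ⟨_, h, π'.apply_symm_apply ℓ⟩⟩

end CaterpillarSpine

end SimpleGraph

open scoped Classical in
theorem stmt3 {α : Type*} [Fintype α] (H : SimpleGraph α) (hT : H.IsTree)
    (hedge : ∃ a b : α, H.Adj a b)
    (hJ3 : ¬ ∃ s : Set α, Nonempty (H.induce s ≃g Jgraph 3))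
    (U : Set α) (hbip : ∀ a b : α, H.Adj a b → (a ∈ U ↔ b ∉ U))
    (h h' : ℕ) (hh : Nat.card ↥U = h) (hh' : Nat.card ↥(Uᶜ) = h') :
    ∃ (π : ↥U ≃ Fin h) (π' : ↥(Uᶜ) ≃ Fin h')
      (m M : Fin h → Fin h') (m' M' : Fin h' → Fin h),
      Monotone m ∧ Monotone M ∧ Monotone m' ∧ Monotone M' ∧
      (∀ (u : ↥U) (ℓ : Fin h'),
        (∃ u' : ↥(Uᶜ), H.Adj ↑u ↑u' ∧ π' u' = ℓ) ↔
          m (π u) ≤ ℓ ∧ ℓ ≤ M (π u)) ∧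
      (∀ (u' : ↥(Uᶜ)) (ℓ : Fin h),
        (∃ u : ↥U, H.Adj ↑u' ↑u ∧ π u = ℓ) ↔
          m' (π' u') ≤ ℓ ∧ ℓ ≤ M' (π' u')) := by
  obtain ⟨a₀, b₀, hab⟩ := hedge
  have : Nontrivial α := ⟨a₀, b₀, hab.ne⟩
  have hnbr : ∀ a, ∃ b, H.Adj a b := fun a ↦
    H.mem_support.mp (hT.connected.preconnected.support_eq_univ ▸ Set.mem_univ a)
  obtain ⟨C⟩ := SimpleGraph.nonempty_caterpillarSpine hT hJ3
  obtain ⟨π, hπ⟩ := exists_equiv_fin_monotone (fun u : U ↦ C.pos u) hh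
  obtain ⟨π', hπ'⟩ := exists_equiv_fin_monotone (fun u : ↥Uᶜ ↦ C.pos u) hh'
  have hbip' : ∀ a b, H.Adj a b → (a ∈ U ↔ b ∈ Uᶜ) := hbip
  obtain ⟨m, M, hm, hM, hmM⟩ :=
    C.exists_monotone_nbhd_bounds isCompl_compl hbip' hnbr π π' hπ hπ'
  obtain ⟨m', M', hm', hM', hmM'⟩ := C.exists_monotone_nbhd_bounds isCompl_compl.symm
    (fun a b h ↦ (hbip' b a h.symm).symm) hnbr π' π hπ' hπ
  exact ⟨π, π', m, M, m', M', hm, hM, hm', hM', hmM, hmM'⟩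
end

section
/- Let G = (V, E) be a finite connected simple graph and let α, β, γ be three distinct vertices of G. If E' ⊆ E is a multiterminal cut of minimum cardinality among all multiterminal cuts for G with terminals α, β, γ, then the graph (V, E ∖ E') has exactly 3 connected components. -/
/-!
STATEMENT 6: In a finite connected simple graph with three distinct terminals, a
multiterminal cut of minimum cardinality leaves exactly 3 connected components.
-/

/-- If we add one edge `s(u,v)` to a graph `H`, any walk in the resulting graph
either stays in `H`, or passes through the new edge. -/
private lemma aux_sup_reach {V : Type*} (H : SimpleGraph V) (u v : V) :
    ∀ {x y : V}, (H ⊔ SimpleGraph.fromEdgeSet {s(u,v)}).Walk x y →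
      H.Reachable x y ∨ (H.Reachable x u ∧ H.Reachable v y) ∨
        (H.Reachable x v ∧ H.Reachable u y) := by
  intro x y w
  induction w with
  | nil => exact Or.inl (SimpleGraph.Reachable.refl _)
  | @cons p q r h w ih =>
    rw [SimpleGraph.sup_adj] at h
    rcases h with h | h
    · rcases ih with h1 | ⟨h1, h2⟩ | ⟨h1, h2⟩
      · exact Or.inl ((SimpleGraph.Adj.reachable h).trans h1)
      · exact Or.inr (Or.inl ⟨(SimpleGraph.Adj.reachable h).trans h1, h2⟩)
      · exact Or.inr (Or.inr ⟨(SimpleGraph.Adj.reachable h).trans h1, h2⟩)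
    · rw [SimpleGraph.fromEdgeSet_adj, Set.mem_singleton_iff, Sym2.eq_iff] at h
      rcases h.1 with ⟨hp, hq⟩ | ⟨hp, hq⟩
      · subst hp; subst hq
        rcases ih with h1 | ⟨h1, h2⟩ | ⟨h1, h2⟩
        · exact Or.inr (Or.inl ⟨SimpleGraph.Reachable.refl _, h1⟩)
        · exact Or.inr (Or.inl ⟨SimpleGraph.Reachable.refl _, h2⟩)
        · exact Or.inl h2
      · subst hp; subst hq
        rcases ih with h1 | ⟨h1, h2⟩ | ⟨h1, h2⟩
        · exact Or.inr (Or.inr ⟨SimpleGraph.Reachable.refl _, h1⟩)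
        · exact Or.inl h2
        · exact Or.inr (Or.inr ⟨SimpleGraph.Reachable.refl _, h2⟩)

/-- Any walk in `G` either survives deleting the edge set `E`, or reaches (within
the deleted graph) an endpoint of some deleted edge. -/
private lemma aux_walk_split {V : Type*} (G : SimpleGraph V) (E : Set (Sym2 V)) :
    ∀ {d t : V}, G.Walk d t →
      (G.deleteEdges E).Reachable d t ∨
        ∃ x y : V, (G.deleteEdges E).Reachable d x ∧ G.Adj x y ∧ s(x,y) ∈ E := by
  intro d t w
  induction w with
  | nil => exact Or.inl (SimpleGraph.Reachable.refl _)
  | @cons p q r h w ih =>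
    by_cases he : s(p, q) ∈ E
    · exact Or.inr ⟨p, q, SimpleGraph.Reachable.refl _, h, he⟩
    · have hadj : (G.deleteEdges E).Adj p q := by
        rw [SimpleGraph.deleteEdges_adj]; exact ⟨h, he⟩
      rcases ih with h1 | ⟨x, y, h1, h2, h3⟩
      · exact Or.inl (hadj.reachable.trans h1)
      · exact Or.inr ⟨x, y, hadj.reachable.trans h1, h2, h3⟩

open scoped Classical in
theorem stmt6 {V : Type*} [Fintype V] (G : SimpleGraph V) (hG : G.Connected)
    (a b c : V) (hab : a ≠ b) (hac : a ≠ c) (hbc : b ≠ c)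
    (E' : Finset (Sym2 V)) (hE'sub : E' ⊆ G.edgeFinset)
    (hcut : ¬ (G.deleteEdges ↑E').Reachable a b ∧
            ¬ (G.deleteEdges ↑E').Reachable a c ∧
            ¬ (G.deleteEdges ↑E').Reachable b c)
    (hmin : ∀ F : Finset (Sym2 V), F ⊆ G.edgeFinset →
      (¬ (G.deleteEdges ↑F).Reachable a b ∧
       ¬ (G.deleteEdges ↑F).Reachable a c ∧
       ¬ (G.deleteEdges ↑F).Reachable b c) →
      E'.card ≤ F.card) :
    Nat.card (G.deleteEdges ↑E').ConnectedComponent = 3 := by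
  set H := G.deleteEdges (↑E' : Set (Sym2 V)) with hH
  obtain ⟨hnab, hnac, hnbc⟩ := hcut
  set Ca := H.connectedComponentMk a with hCa
  set Cb := H.connectedComponentMk b with hCb
  set Cc := H.connectedComponentMk c with hCc
  have hCab : Ca ≠ Cb := fun h => hnab (SimpleGraph.ConnectedComponent.eq.mp h)
  have hCac : Ca ≠ Cc := fun h => hnac (SimpleGraph.ConnectedComponent.eq.mp h)
  have hCbc : Cb ≠ Cc := fun h => hnbc (SimpleGraph.ConnectedComponent.eq.mp h)
  -- every connected component is one of the three terminal components
  have hall : ∀ D : H.ConnectedComponent, D = Ca ∨ D = Cb ∨ D = Cc := by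
    refine SimpleGraph.ConnectedComponent.ind (fun d => ?_)
    by_contra hcon
    push_neg at hcon
    obtain ⟨hDa, hDb, hDc⟩ := hcon
    -- take a walk in G from d to a; it must meet a deleted edge
    obtain ⟨w⟩ := hG.preconnected d a
    rcases aux_walk_split G (↑E' : Set (Sym2 V)) w with hr | ⟨x, y, hdx, hxy, hmem⟩
    · exact hDa (SimpleGraph.ConnectedComponent.eq.mpr hr)
    · have hmem' : s(x, y) ∈ E' := hmem
      have hDx : H.connectedComponentMk d = H.connectedComponentMk x :=
        SimpleGraph.ConnectedComponent.eq.mpr hdx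
      -- removing this edge from E' still gives a cut, contradicting minimality
      have hle : G.deleteEdges (↑(E'.erase s(x,y)) : Set (Sym2 V)) ≤
          H ⊔ SimpleGraph.fromEdgeSet {s(x,y)} := by
        intro p q hpq
        rw [SimpleGraph.deleteEdges_adj] at hpq
        obtain ⟨hpq1, hpq2⟩ := hpq
        by_cases hcase : s(p,q) = s(x,y)
        · exact Or.inr (by rw [SimpleGraph.fromEdgeSet_adj]
                           exact ⟨by rw [hcase]; rfl, hpq1.ne⟩)
        · refine Or.inl ?_
          rw [hH, SimpleGraph.deleteEdges_adj]
          refine ⟨hpq1, fun hmem2 => hpq2 ?_⟩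
          simp only [Finset.coe_erase, Set.mem_diff, Set.mem_singleton_iff]
          exact ⟨hmem2, hcase⟩
      have key : ∀ {s t : V}, (G.deleteEdges (↑(E'.erase s(x,y)) : Set (Sym2 V))).Reachable s t →
          H.Reachable s t ∨ (H.Reachable s x ∧ H.Reachable y t) ∨
            (H.Reachable s y ∧ H.Reachable x t) := by
        intro s t hr
        obtain ⟨w'⟩ := hr.mono hle
        exact aux_sup_reach H x y w'
      have hxa : ¬ H.Reachable a x := fun h =>
        hDa (by rw [hDx, hCa]; exact (SimpleGraph.ConnectedComponent.eq.mpr h).symm)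
      have hxb : ¬ H.Reachable b x := fun h =>
        hDb (by rw [hDx, hCb]; exact (SimpleGraph.ConnectedComponent.eq.mpr h).symm)
      have hxc : ¬ H.Reachable c x := fun h =>
        hDc (by rw [hDx, hCc]; exact (SimpleGraph.ConnectedComponent.eq.mpr h).symm)
      have hcut' : (¬ (G.deleteEdges (↑(E'.erase s(x,y)) : Set (Sym2 V))).Reachable a b ∧
          ¬ (G.deleteEdges (↑(E'.erase s(x,y)) : Set (Sym2 V))).Reachable a c ∧
          ¬ (G.deleteEdges (↑(E'.erase s(x,y)) : Set (Sym2 V))).Reachable b c) := by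
        refine ⟨fun hr => ?_, fun hr => ?_, fun hr => ?_⟩
        · rcases key hr with h1 | ⟨h1, h2⟩ | ⟨h1, h2⟩
          · exact hnab h1
          · exact hxa h1
          · exact hxb h2.symm
        · rcases key hr with h1 | ⟨h1, h2⟩ | ⟨h1, h2⟩
          · exact hnac h1
          · exact hxa h1
          · exact hxc h2.symm
        · rcases key hr with h1 | ⟨h1, h2⟩ | ⟨h1, h2⟩
          · exact hnbc h1
          · exact hxb h1
          · exact hxc h2.symm
      have hminle := hmin (E'.erase s(x,y)) ((Finset.erase_subset _ _).trans hE'sub) hcut'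
      have hlt : (E'.erase s(x,y)).card < E'.card := Finset.card_erase_lt_of_mem hmem'
      omega
  -- now count: the component set is exactly {Ca, Cb, Cc}
  have huniv : (Set.univ : Set H.ConnectedComponent) = {Ca, Cb, Cc} := by
    ext D
    simp only [Set.mem_univ, true_iff, Set.mem_insert_iff, Set.mem_singleton_iff]
    exact hall D
  rw [← Set.ncard_univ, huniv]
  rw [Set.ncard_insert_of_notMem (by simp [hCab, hCac]) (Set.toFinite _),
    Set.ncard_pair hCbc]
end

section
/- In the tree J_3^*, let w_k(h) denote the number of walks of length k starting at vertex h. Then: w_1 attains its maximum value 6 uniquely at the vertex x_1 (i.e., w_1(x_1) = 6 and w_1(h) < 6 for every other vertex h); w_2 attains its maximum value 18 uniquely at y_1; and w_3 attains its maximum value 46 uniquely at z_1. -/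
/-!
STATEMENT 8: In the tree `J₃*`, the number of length-1 walks is uniquely maximised
(with value 6) at `x₁`, the number of length-2 walks is uniquely maximised (with
value 18) at `y₁`, and the number of length-3 walks is uniquely maximised (with
value 46) at `z₁`.
-/

/-- The vertex set of the tree `J₃*`. -/
inductive JStarVert : Type
  | w : JStarVert
  | x0 : JStarVert
  | x1 : JStarVert
  | x2 (i : Fin 5) : JStarVert
  | y0 : JStarVert
  | y1 : JStarVert
  | y2 (i : Fin 4) : JStarVert
  | y3 (i : Fin 4) (j : Fin 3) : JStarVert
  | z0 : JStarVert
  | z1 : JStarVert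
  | z2 (i : Fin 3) : JStarVert
  | z3 (i : Fin 3) (j : Fin 3) : JStarVert
  | z4 (i : Fin 3) (j : Fin 3) (k : Fin 2) : JStarVert

/-- The tree `J₃*`. -/
def JStar : SimpleGraph JStarVert :=
  SimpleGraph.fromRel (fun a b =>
    (a = JStarVert.w ∧ b = JStarVert.x0) ∨
    (a = JStarVert.w ∧ b = JStarVert.y0) ∨
    (a = JStarVert.w ∧ b = JStarVert.z0) ∨
    (a = JStarVert.x0 ∧ b = JStarVert.x1) ∨
    (a = JStarVert.y0 ∧ b = JStarVert.y1) ∨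
    (a = JStarVert.z0 ∧ b = JStarVert.z1) ∨
    (∃ i, a = JStarVert.x1 ∧ b = JStarVert.x2 i) ∨
    (∃ i, a = JStarVert.y1 ∧ b = JStarVert.y2 i) ∨
    (∃ i j, a = JStarVert.y2 i ∧ b = JStarVert.y3 i j) ∨
    (∃ i, a = JStarVert.z1 ∧ b = JStarVert.z2 i) ∨
    (∃ i j, a = JStarVert.z2 i ∧ b = JStarVert.z3 i j) ∨
    (∃ i j k, a = JStarVert.z3 i j ∧ b = JStarVert.z4 i j k))

/-- The number of walks of length `k` in `J₃*` starting at the vertex `h`. -/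
noncomputable def numWalksJStar (k : ℕ) (h : JStarVert) : ℕ :=
  Nat.card {p : Σ v : JStarVert, JStar.Walk h v // p.2.length = k}

/-!
A walk of length `k + 1` from `h` is a step to a neighbour `v` followed by a walk of length `k`
from `v`, so `w_{k+1}(h) = ∑_{v ~ h} w_k(v)`. Presenting `J₃*` by adjacency lists turns this
recursion into a computable function, and the finitely many values in the claim are checked by
evaluation.
-/

namespace SimpleGraph

def adjListWalkCount {V : Type*} (nbrs : V → List V) : ℕ → V → ℕ
  | 0, _ => 1
  | k + 1, h => ((nbrs h).map (adjListWalkCount nbrs k)).sum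

variable {V : Type*} [Fintype V] {G : SimpleGraph V}

theorem natCard_walks_length_eq_sum_adjMatrix_pow [DecidableEq V] [DecidableRel G.Adj]
    (k : ℕ) (h : V) :
    Nat.card {p : Σ v, G.Walk h v // p.2.length = k} = ∑ v, (G.adjMatrix ℕ ^ k) h v := by
  let e : {p : Σ v, G.Walk h v // p.2.length = k} ≃ Σ v, {p : G.Walk h v // p.length = k} :=
    { toFun := fun p => ⟨p.1.1, p.1.2, p.2⟩
      invFun := fun q => ⟨⟨q.1, q.2.1⟩, q.2.2⟩ }
  rw [Nat.card_congr e, Nat.card_sigma]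
  refine Finset.sum_congr rfl fun v _ => ?_
  rw [adjMatrix_pow_apply_eq_card_walk, Nat.card_eq_fintype_card]
  rfl

theorem natCard_walks_length_eq_adjListWalkCount (nbrs : V → List V)
    (hnodup : ∀ a, (nbrs a).Nodup) (hadj : ∀ a b, G.Adj a b ↔ b ∈ nbrs a) (k : ℕ) (h : V) :
    Nat.card {p : Σ v, G.Walk h v // p.2.length = k} = adjListWalkCount nbrs k h := by
  classical
  rw [natCard_walks_length_eq_sum_adjMatrix_pow]
  induction k generalizing h with
  | zero => simp [adjListWalkCount, Matrix.one_apply]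
  | succ k ih =>
    have hnbrs : G.neighborFinset h = (nbrs h).toFinset := by
      ext v
      simp [hadj]
    calc ∑ v, (G.adjMatrix ℕ ^ (k + 1)) h v
        = ∑ v, ∑ u ∈ G.neighborFinset h, (G.adjMatrix ℕ ^ k) u v := by
          simp only [pow_succ', adjMatrix_mul_apply]
      _ = ∑ u ∈ (nbrs h).toFinset, adjListWalkCount nbrs k u := by
          rw [Finset.sum_comm, hnbrs]
          simp only [ih]
      _ = adjListWalkCount nbrs (k + 1) h := List.sum_toFinset _ (hnodup h)

end SimpleGraph

deriving instance DecidableEq for JStarVert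
deriving instance Fintype for JStarVert

namespace JStarVert

def parent : JStarVert → Option JStarVert
  | w => none
  | x0 | y0 | z0 => some w
  | x1 => some x0
  | y1 => some y0
  | z1 => some z0
  | x2 _ => some x1
  | y2 _ => some y1
  | y3 i _ => some (y2 i)
  | z2 _ => some z1
  | z3 i _ => some (z2 i)
  | z4 i j _ => some (z3 i j)

def neighbors : JStarVert → List JStarVert
  | w => [x0, y0, z0]
  | x0 => [w, x1]
  | y0 => [w, y1]
  | z0 => [w, z1]
  | x1 => x0 :: List.ofFn x2
  | y1 => y0 :: List.ofFn y2
  | z1 => z0 :: List.ofFn z2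
  | x2 _ => [x1]
  | y2 i => y1 :: List.ofFn (y3 i)
  | y3 i _ => [y2 i]
  | z2 i => z1 :: List.ofFn (z3 i)
  | z3 i j => z2 i :: List.ofFn (z4 i j)
  | z4 i j _ => [z3 i j]

theorem nodup_neighbors : ∀ a : JStarVert, a.neighbors.Nodup := by
  decide

theorem mem_neighbors_iff (a : JStarVert) :
    ∀ b, b ∈ a.neighbors ↔ a ≠ b ∧ (b.parent = some a ∨ a.parent = some b) := by
  cases a <;> decide +revert

end JStarVert

open JStarVert

theorem jStar_eq_fromRel_parent : JStar = SimpleGraph.fromRel (fun a b => b.parent = some a) := by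
  unfold JStar
  congr 1
  ext a b
  cases b <;> simp [parent, eq_comm]

theorem jStar_adj_iff_mem_neighbors (a b : JStarVert) : JStar.Adj a b ↔ b ∈ a.neighbors := by
  rw [mem_neighbors_iff, jStar_eq_fromRel_parent, SimpleGraph.fromRel_adj]

theorem numWalksJStar_eq_adjListWalkCount (k : ℕ) (h : JStarVert) :
    numWalksJStar k h = SimpleGraph.adjListWalkCount neighbors k h :=
  SimpleGraph.natCard_walks_length_eq_adjListWalkCount neighbors nodup_neighbors
    jStar_adj_iff_mem_neighbors k h

theorem stmt8 :
    (numWalksJStar 1 JStarVert.x1 = 6 ∧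
      ∀ h : JStarVert, h ≠ JStarVert.x1 → numWalksJStar 1 h < 6) ∧
    (numWalksJStar 2 JStarVert.y1 = 18 ∧
      ∀ h : JStarVert, h ≠ JStarVert.y1 → numWalksJStar 2 h < 18) ∧
    (numWalksJStar 3 JStarVert.z1 = 46 ∧
      ∀ h : JStarVert, h ≠ JStarVert.z1 → numWalksJStar 3 h < 46) := by
  simp only [numWalksJStar_eq_adjListWalkCount]
  decide
end

section
/- Let q ≥ 1 be an integer and let B be a finite connected bipartite simple graph with bipartition (U, V) and at least one edge. Then the number of homomorphisms σ from B to J_q such that σ(u) ∈ {c'_1, …, c'_q} for every u ∈ U equals ∑_{f : U → [q]} 2^{n(f)}, where n(f) is the number of vertices v ∈ V such that f is constant on the neighbourhood of v in B. -/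
open Function

namespace JVert

def toOption {q : ℕ} : JVert q → Option (Fin q ⊕ Fin q)
  | w => none
  | c i => some (.inl i)
  | c' i => some (.inr i)

lemma toOption_injective {q : ℕ} : Injective (toOption : JVert q → _) := by
  rintro (_ | i | i) (_ | j | j) h <;> simp_all [toOption]

instance (q : ℕ) : Finite (JVert q) := .of_injective _ toOption_injective

lemma c'_injective {q : ℕ} : Injective (c' : Fin q → JVert q) := fun _ _ => c'.inj

end JVert

lemma Jgraph_adj_c'_iff {q : ℕ} (i : Fin q) (x : JVert q) :
    (Jgraph q).Adj (.c' i) x ↔ x = .w ∨ x = .c i := by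
  cases x <;> simp [Jgraph, SimpleGraph.fromRel_adj, eq_comm]

lemma card_Jgraph_common_neighbors_c' {q : ℕ} {α : Type*} (f : α → Fin q) {p : α → Prop}
    (hp : ∃ a, p a) [Decidable (∀ a₁ a₂, p a₁ → p a₂ → f a₁ = f a₂)] :
    Nat.card {x : JVert q // ∀ a, p a → (Jgraph q).Adj (.c' (f a)) x} =
      if ∀ a₁ a₂, p a₁ → p a₂ → f a₁ = f a₂ then 2 else 1 := by
  obtain ⟨a₀, ha₀⟩ := hp
  simp_rw [Jgraph_adj_c'_iff]
  change Nat.card {x : JVert q | ∀ a, p a → x = .w ∨ x = .c (f a)} = _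
  rw [Nat.card_coe_set_eq]
  split_ifs with hconst
  · have : {x : JVert q | ∀ a, p a → x = .w ∨ x = .c (f a)} = {.w, .c (f a₀)} := by
      ext x
      refine ⟨fun h => h a₀ ha₀, ?_⟩
      rintro (rfl | rfl) a ha
      · exact .inl rfl
      · exact .inr (by rw [hconst a a₀ ha ha₀])
    rw [this, Set.ncard_pair (by simp)]
  · push Not at hconst
    obtain ⟨a₁, a₂, ha₁, ha₂, hne⟩ := hconst
    have : {x : JVert q | ∀ a, p a → x = .w ∨ x = .c (f a)} = {.w} := by
      ext x
      refine ⟨fun h => ?_, fun hx a _ => .inl hx⟩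
      rcases h a₁ ha₁ with hx | rfl
      · exact hx
      · rcases h a₂ ha₂ with hx | hx
        · cases hx
        · exact absurd (JVert.c.inj hx) hne
    rw [this, Set.ncard_singleton]

lemma Fintype.prod_ite_eq_pow_card {α M : Type*} [Fintype α] [CommMonoid M] (p : α → Prop)
    [DecidablePred p] (m : M) : ∏ a, (if p a then m else 1) = m ^ Nat.card {a // p a} := by
  rw [Finset.prod_ite, Finset.prod_const, Finset.prod_const, one_pow, mul_one,
    Nat.card_eq_fintype_card, Fintype.card_subtype]

section BipartiteHoms

variable {β γ ι : Type*} {B : SimpleGraph β} {H : SimpleGraph γ} {U : Set β}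

lemma forall_adj_iff_of_bipartite (hbip : ∀ a b : β, B.Adj a b → (a ∈ U ↔ b ∉ U))
    (σ : β → γ) :
    (∀ a b, B.Adj a b → H.Adj (σ a) (σ b)) ↔
      ∀ (u : U) (v : ↥Uᶜ), B.Adj u v → H.Adj (σ u) (σ v) := by
  refine ⟨fun h u v huv => h u v huv, fun h a b hab => ?_⟩
  by_cases ha : a ∈ U
  · exact h ⟨a, ha⟩ ⟨b, (hbip a b hab).1 ha⟩ hab
  · have hb : b ∈ U := of_not_not fun hb => ha ((hbip a b hab).2 hb)
    exact (h ⟨b, hb⟩ ⟨a, ha⟩ hab.symm).symm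

open Classical in
noncomputable def homsEquivSigma (hbip : ∀ a b : β, B.Adj a b → (a ∈ U ↔ b ∉ U))
    {c : ι → γ} (hc : Injective c) :
    {σ : β → γ // (∀ a b, B.Adj a b → H.Adj (σ a) (σ b)) ∧ ∀ u ∈ U, ∃ i, σ u = c i} ≃
      Σ f : U → ι, {τ : ↥Uᶜ → γ // ∀ (v : ↥Uᶜ) (u : U), B.Adj u v → H.Adj (c (f u)) (τ v)} where
  toFun σ := ⟨fun u => (σ.2.2 u u.2).choose, fun v => σ.1 v, fun v u huv =>
    (σ.2.2 u u.2).choose_spec ▸ σ.2.1 u v huv⟩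
  invFun p := ⟨fun a => if ha : a ∈ U then c (p.1 ⟨a, ha⟩) else p.2.1 ⟨a, ha⟩,
    (forall_adj_iff_of_bipartite hbip _).2 fun u v huv => by
      simpa only [dif_pos u.2, dif_neg v.2] using p.2.2 v u huv,
    fun u hu => ⟨p.1 ⟨u, hu⟩, dif_pos hu⟩⟩
  left_inv σ := by
    ext a
    by_cases ha : a ∈ U
    · simp only [dif_pos ha]
      exact ((σ.2.2 a ha).choose_spec).symm
    · simp only [dif_neg ha]
  right_inv p := by
    refine Sigma.subtype_ext (funext fun u => hc ?_) (funext fun v => dif_neg v.2)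
    exact (Exists.choose_spec (p := fun i => _ = c i) _).symm.trans (dif_pos u.2)

open Classical in
theorem card_homs_eq_sum_prod [Fintype β] [Finite γ] [Fintype ι]
    (hbip : ∀ a b : β, B.Adj a b → (a ∈ U ↔ b ∉ U)) {c : ι → γ} (hc : Injective c) :
    Nat.card {σ : β → γ // (∀ a b, B.Adj a b → H.Adj (σ a) (σ b)) ∧ ∀ u ∈ U, ∃ i, σ u = c i} =
      ∑ f : U → ι, ∏ v : ↥Uᶜ, Nat.card {x : γ // ∀ u : U, B.Adj u v → H.Adj (c (f u)) x} := by
  rw [Nat.card_congr (homsEquivSigma hbip hc), Nat.card_sigma]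
  refine Finset.sum_congr rfl fun f _ => ?_
  rw [← Nat.card_pi]
  exact Nat.card_congr <| Equiv.subtypePiEquivPi
    (p := fun (v : ↥Uᶜ) x => ∀ u : U, B.Adj u v → H.Adj (c (f u)) x)

end BipartiteHoms

open scoped Classical in
theorem stmt9_general (q : ℕ) {β : Type*} [Fintype β]
    (B : SimpleGraph β) (hconn : B.Connected)
    (hedge : ∃ a b : β, B.Adj a b)
    (U : Set β) (hbip : ∀ a b : β, B.Adj a b → (a ∈ U ↔ b ∉ U)) :
    Nat.card {σ : β → JVert q //
        (∀ a b : β, B.Adj a b → (Jgraph q).Adj (σ a) (σ b)) ∧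
        ∀ u ∈ U, ∃ i : Fin q, σ u = JVert.c' i}
      = ∑ f : ↥U → Fin q,
          2 ^ Nat.card {v : ↥(Uᶜ) // ∀ u₁ u₂ : ↥U,
              B.Adj ↑u₁ ↑v → B.Adj ↑u₂ ↑v → f u₁ = f u₂} := by
  obtain ⟨a, b, hab⟩ := hedge
  have : Nontrivial β := nontrivial_of_ne a b hab.ne
  have hnbr (v : ↥Uᶜ) : ∃ u : U, B.Adj u v := by
    obtain ⟨u, hvu⟩ := hconn.preconnected.exists_adj_of_nontrivial v
    exact ⟨⟨u, of_not_not fun hu => v.2 ((hbip _ _ hvu).2 hu)⟩, hvu.symm⟩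
  rw [card_homs_eq_sum_prod hbip JVert.c'_injective]
  refine Finset.sum_congr rfl fun f _ => ?_
  simp_rw [card_Jgraph_common_neighbors_c' f (hnbr _)]
  exact Fintype.prod_ite_eq_pow_card _ 2

open scoped Classical in
theorem stmt9 (q : ℕ) (hq : 1 ≤ q) {β : Type*} [Fintype β]
    (B : SimpleGraph β) (hconn : B.Connected)
    (hedge : ∃ a b : β, B.Adj a b)
    (U : Set β) (hbip : ∀ a b : β, B.Adj a b → (a ∈ U ↔ b ∉ U)) :
    Nat.card {σ : β → JVert q //
        (∀ a b : β, B.Adj a b → (Jgraph q).Adj (σ a) (σ b)) ∧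
        ∀ u ∈ U, ∃ i : Fin q, σ u = JVert.c' i}
      = ∑ f : ↥U → Fin q,
          2 ^ Nat.card {v : ↥(Uᶜ) // ∀ u₁ u₂ : ↥U,
              B.Adj ↑u₁ ↑v → B.Adj ↑u₂ ↑v → f u₁ = f u₂} :=
  stmt9_general q B hconn hedge U hbip
end

section
/- Let q ≥ 2 be an integer and let G = (V, E) be a finite simple graph with m edges. Let G' be the 2-stretch of G, i.e. the bipartite graph with vertex set V ∪ E and with an edge between u ∈ V and e ∈ E exactly when u is an endpoint of e. Then the number of proper q-colourings of G' equals ∑_{σ : V → [q]} (q−1)^{mono(σ)} (q−2)^{m − mono(σ)}, where mono(σ) denotes the number of edges {u,v} ∈ E with σ(u) = σ(v). Equivalently, this number equals (q−2)^m · Z_Potts(G; q, 1/(q−2)) when q > 2. -/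
/-!
STATEMENT 10: The number of proper `q`-colourings of the 2-stretch `G'` of a
finite simple graph `G` with `m` edges equals
`∑_{σ : V → [q]} (q-1)^{mono(σ)} (q-2)^{m - mono(σ)}`; equivalently, for `q > 2`
it equals `(q-2)^m · Z_Potts(G; q, 1/(q-2))`.
-/

/-- The 2-stretch of a graph `G`: the bipartite graph on `V ⊕ E(G)` joining each
vertex `u` to every edge `e` of which `u` is an endpoint. -/
def twoStretch {V : Type*} (G : SimpleGraph V) : SimpleGraph (V ⊕ ↥G.edgeSet) :=
  SimpleGraph.fromRel (fun a b =>
    ∃ (u : V) (e : ↥G.edgeSet), a = Sum.inl u ∧ b = Sum.inr e ∧ u ∈ (e : Sym2 V))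

open scoped Classical in
lemma key (q : ℕ) {V : Type*} [Fintype V] (G : SimpleGraph V) :
    Nat.card {c : V ⊕ ↥G.edgeSet → Fin q //
        ∀ a b, (twoStretch G).Adj a b → c a ≠ c b}
      = ∑ σ : V → Fin q, ∏ e : ↥G.edgeSet,
          Fintype.card {x : Fin q // ∀ u ∈ (e : Sym2 V), σ u ≠ x} := by
  have hadj : ∀ (u : V) (e : ↥G.edgeSet), u ∈ (e : Sym2 V) →
      (twoStretch G).Adj (Sum.inl u) (Sum.inr e) := by
    intro u e hu
    rw [twoStretch, SimpleGraph.fromRel_adj]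
    exact ⟨by simp, Or.inl ⟨u, e, rfl, rfl, hu⟩⟩
  have E : {c : V ⊕ ↥G.edgeSet → Fin q //
        ∀ a b, (twoStretch G).Adj a b → c a ≠ c b}
      ≃ Σ σ : V → Fin q, ∀ e : ↥G.edgeSet,
          {x : Fin q // ∀ u ∈ (e : Sym2 V), σ u ≠ x} := by
    refine
      { toFun := fun c => ⟨fun v => c.1 (Sum.inl v), fun e =>
          ⟨c.1 (Sum.inr e), fun u hu => c.2 _ _ (hadj u e hu)⟩⟩
        invFun := fun p => ⟨Sum.elim p.1 (fun e => (p.2 e).1), ?_⟩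
        left_inv := fun c => by
          ext a; cases a <;> rfl
        right_inv := fun p => rfl }
    rintro a b ⟨hne, (⟨u, e, rfl, rfl, hu⟩ | ⟨u, e, rfl, rfl, hu⟩)⟩
    · exact (p.2 e).2 u hu
    · exact fun h => (p.2 e).2 u hu h.symm
  rw [Nat.card_eq_of_equiv_fin (E.trans (Fintype.equivFin _))]
  simp [Fintype.card_sigma, Fintype.card_pi]

open scoped Classical in
lemma card_edge (q : ℕ) {V : Type*} [Fintype V] (G : SimpleGraph V)
    (σ : V → Fin q) (e : ↥G.edgeSet) :
    Fintype.card {x : Fin q // ∀ u ∈ (e : Sym2 V), σ u ≠ x}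
      = if (Sym2.map σ (e : Sym2 V)).IsDiag then q - 1 else q - 2 := by
  obtain ⟨u, v, h⟩ := Sym2.ind (f := fun z => ∃ x y, z = s(x, y))
    (fun x y => ⟨x, y, rfl⟩) (e : Sym2 V)
  have hadj : G.Adj u v := by rw [← SimpleGraph.mem_edgeSet, ← h]; exact e.2
  have hne : u ≠ v := hadj.ne
  have hcard : Fintype.card {x : Fin q // ∀ w ∈ (e : Sym2 V), σ w ≠ x}
      = q - ({σ u, σ v} : Finset (Fin q)).card := by
    rw [Fintype.card_subtype]
    have : Finset.univ.filter (fun x : Fin q => ∀ w ∈ (e : Sym2 V), σ w ≠ x)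
        = Finset.univ \ {σ u, σ v} := by
      ext x
      simp only [Finset.mem_filter, Finset.mem_univ, true_and, Finset.mem_sdiff,
        Finset.mem_insert, Finset.mem_singleton, h, Sym2.mem_iff, not_or]
      constructor
      · intro hx
        exact ⟨fun h' => hx u (Or.inl rfl) h'.symm, fun h' => hx v (Or.inr rfl) h'.symm⟩
      · rintro ⟨h1, h2⟩ w (rfl | rfl)
        · exact fun h' => h1 h'.symm
        · exact fun h' => h2 h'.symm
    rw [this, Finset.card_sdiff_of_subset (Finset.subset_univ _), Finset.card_univ,
      Fintype.card_fin]
  rw [hcard, h]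
  by_cases hd : σ u = σ v
  · simp [hd, Sym2.mk_isDiag_iff]
  · rw [if_neg (by simpa [Sym2.mk_isDiag_iff] using hd), Finset.card_pair hd]

lemma real_term (x : ℝ) (hx : 0 < x) (m a : ℕ) (ham : a ≤ m) :
    (x + 1) ^ a * x ^ (m - a) = x ^ m * (1 + 1 / x) ^ a := by
  have hsplit : x ^ m = x ^ (m - a) * x ^ a := by
    rw [← pow_add]; congr 1; omega
  rw [hsplit, mul_assoc, ← mul_pow]
  rw [show x * (1 + 1 / x) = x + 1 by field_simp]
  ring

open scoped Classical in
theorem stmt10 (q : ℕ) (hq : 2 ≤ q) {V : Type*} [Fintype V] (G : SimpleGraph V) :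
    (Nat.card {c : V ⊕ ↥G.edgeSet → Fin q //
        ∀ a b, (twoStretch G).Adj a b → c a ≠ c b}
      = ∑ σ : V → Fin q,
          (q - 1) ^ Nat.card {e : ↥G.edgeSet // (Sym2.map σ (e : Sym2 V)).IsDiag}
            * (q - 2) ^ (Nat.card ↥G.edgeSet
                - Nat.card {e : ↥G.edgeSet // (Sym2.map σ (e : Sym2 V)).IsDiag})) ∧
    (2 < q →
      (Nat.card {c : V ⊕ ↥G.edgeSet → Fin q //
          ∀ a b, (twoStretch G).Adj a b → c a ≠ c b} : ℝ)
        = ((q : ℝ) - 2) ^ Nat.card ↥G.edgeSet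
            * ∑ σ : V → Fin q,
                (1 + 1 / ((q : ℝ) - 2))
                  ^ Nat.card {e : ↥G.edgeSet // (Sym2.map σ (e : Sym2 V)).IsDiag}) := by
  have hle : ∀ σ : V → Fin q,
      Nat.card {e : ↥G.edgeSet // (Sym2.map σ (e : Sym2 V)).IsDiag}
        ≤ Nat.card ↥G.edgeSet := by
    intro σ
    rw [Nat.card_eq_fintype_card, Nat.card_eq_fintype_card]
    exact Fintype.card_subtype_le _
  have part1 : Nat.card {c : V ⊕ ↥G.edgeSet → Fin q //
        ∀ a b, (twoStretch G).Adj a b → c a ≠ c b}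
      = ∑ σ : V → Fin q,
          (q - 1) ^ Nat.card {e : ↥G.edgeSet // (Sym2.map σ (e : Sym2 V)).IsDiag}
            * (q - 2) ^ (Nat.card ↥G.edgeSet
                - Nat.card {e : ↥G.edgeSet // (Sym2.map σ (e : Sym2 V)).IsDiag}) := by
    rw [key q G]
    refine Finset.sum_congr rfl fun σ _ => ?_
    simp_rw [card_edge q G σ]
    rw [Finset.prod_ite, Finset.prod_const, Finset.prod_const]
    congr 1
    · congr 1
      rw [Nat.card_eq_fintype_card, Fintype.card_subtype]
    · congr 1
      have h1 := Fintype.card_subtype (fun e : ↥G.edgeSet => (Sym2.map σ (e : Sym2 V)).IsDiag)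
      have h2 : (Finset.univ : Finset ↥G.edgeSet).card = Fintype.card ↥G.edgeSet :=
        Finset.card_univ
      have h3 := Finset.card_filter_add_card_filter_not
        (s := (Finset.univ : Finset ↥G.edgeSet))
        (p := fun e => (Sym2.map σ (e : Sym2 V)).IsDiag)
      rw [Nat.card_eq_fintype_card, Nat.card_eq_fintype_card]
      omega
  refine ⟨part1, fun hq2 => ?_⟩
  rw [part1]
  have h2 : (0 : ℝ) < (q : ℝ) - 2 := by
    have : (2 : ℝ) < (q : ℝ) := by exact_mod_cast hq2
    linarith
  rw [Finset.mul_sum, Nat.cast_sum]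
  refine Finset.sum_congr rfl fun σ _ => ?_
  have h1q : 1 ≤ q := Nat.one_le_of_lt hq2
  rw [Nat.cast_mul, Nat.cast_pow, Nat.cast_pow, Nat.cast_sub h1q, Nat.cast_sub hq,
    Nat.cast_one, Nat.cast_two]
  have key2 := real_term ((q : ℝ) - 2) h2 (Nat.card ↥G.edgeSet)
    (Nat.card {e : ↥G.edgeSet // (Sym2.map σ (e : Sym2 V)).IsDiag}) (hle σ)
  rw [show (q : ℝ) - 2 + 1 = (q : ℝ) - 1 by ring] at key2
  exact key2
end

section
/- Let p be a prime, k ≥ 1 an integer with q = p^k, let λ ∈ (0,1) be a real number, and set γ = λ^{−q(p−1)/p} − 1. Let G = (V, E) be a finite connected simple graph with m edges, each edge given an arbitrary orientation, and let Φ be the F_p-linear map from functions σ : V → F_p^k to functions F_p^k × E → F_p given by Φ(σ)(α, (u,v)) = ∑_{i=1}^{k} α_i (σ(v)_i − σ(u)_i). Let C be the image of Φ, a linear code of length qm over F_p. Then Z_Potts(G; q, γ) = q · λ^{−(1−1/p)qm} · ∑_{w ∈ C} λ^{‖w‖}, where ‖w‖ denotes the number of nonzero entries of w. -/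
/-!
Identify the colours `Fin q` with `𝔽_p^k`. For an oriented edge `(u, v)` the linear form
`α ↦ α ⬝ᵥ (σ v - σ u)` vanishes identically if the edge is monochromatic, and otherwise is
nonzero on exactly `(1 - 1/p) q` vectors `α`. Hence `‖Φ σ‖ = (1 - 1/p) q (m - mono σ)`, so the
Potts weight `(1 + γ)^(mono σ) = λ^(-(1 - 1/p) q mono σ)` equals `λ^(-(1 - 1/p) q m) λ^‖Φ σ‖`.
Summing over `σ` counts every codeword `|ker Φ|` times, and as `G` is connected, `ker Φ` consists
of the `q` constant colourings.
-/

open Finset Matrix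

theorem Module.Dual.card_ne_zero_mul_card {F W : Type*} [Field F] [Fintype F] [AddCommGroup W]
    [Module F W] [Fintype W] {f : Module.Dual F W} (hf : f ≠ 0) :
    Nat.card {w // f w ≠ 0} * Fintype.card F = (Fintype.card F - 1) * Fintype.card W := by
  classical
  have hker : Nat.card {w // f w = 0} * Nat.card F = Nat.card W := by
    rw [← f.toAddMonoidHom.ker.card_mul_index, AddSubgroup.index_ker,
      AddMonoidHom.range_eq_top.mpr (LinearMap.surjective hf), AddSubgroup.card_top]
    rfl
  simp only [Nat.card_eq_fintype_card] at hker
  rw [Nat.card_eq_fintype_card, Fintype.card_subtype_compl, Nat.sub_mul, hker,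
    Nat.sub_one_mul, mul_comm]

theorem card_dotProduct_ne_zero_mul_card {ι F : Type*} [Fintype ι] [Field F] [Fintype F]
    {d : ι → F} (hd : d ≠ 0) :
    Nat.card {α : ι → F // α ⬝ᵥ d ≠ 0} * Fintype.card F
      = (Fintype.card F - 1) * Fintype.card F ^ Fintype.card ι := by
  classical
  have hf : dotProductEquiv F ι d ≠ 0 := by simpa using hd
  rw [← Fintype.card_fun, ← Module.Dual.card_ne_zero_mul_card hf]
  congr 1
  exact Nat.card_congr (Equiv.subtypeEquivRight fun α => by simp [dotProduct_comm])

theorem LinearMap.sum_comp_eq_card_ker_nsmul {R M N A : Type*} [Ring R] [AddCommGroup M]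
    [Module R M] [Fintype M] [AddCommGroup N] [Module R N] [DecidableEq N] [AddCommMonoid A]
    (φ : M →ₗ[R] N) (f : N → A) :
    ∑ x, f (φ x) = Nat.card (LinearMap.ker φ) • ∑ y ∈ univ.image φ, f y := by
  classical
  rw [Finset.sum_comp, Finset.smul_sum]
  refine Finset.sum_congr rfl fun y hy => ?_
  have h0 : (0 : N) ∈ Set.range φ := ⟨0, map_zero φ⟩
  rw [AddMonoidHom.card_fiber_eq_of_mem_range φ (by simpa using hy) h0,
    Nat.card_eq_fintype_card, Fintype.card_subtype]
  simp

theorem Nat.card_subtype_prod_eq_sum {A E : Type*} [Fintype A] [Fintype E] (P : A × E → Prop) :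
    Nat.card {x // P x} = ∑ e, Nat.card {a // P (a, e)} := by
  classical
  simp only [Nat.card_eq_fintype_card, Fintype.card_subtype, Finset.card_filter]
  exact Fintype.sum_prod_type_right _

theorem SimpleGraph.Preconnected.apply_eq_of_forall_adj_s14 {V X : Type*} {G : SimpleGraph V}
    (hG : G.Preconnected) {f : V → X} (hf : ∀ u v, G.Adj u v → f u = f v) (u v : V) :
    f u = f v := by
  obtain ⟨w⟩ := hG u v
  induction w with
  | nil => rfl
  | cons ha _ ih => exact (hf _ _ ha).trans ih

theorem Nat.cast_card_subtype_not {R E : Type*} [AddGroupWithOne R] [Finite E] (P : E → Prop) :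
    (Nat.card {e // ¬P e} : R) = Nat.card E - Nat.card {e // P e} := by
  have := Fintype.ofFinite E
  classical
  simp only [Nat.card_eq_fintype_card]
  rw [Fintype.card_subtype_compl, Nat.cast_sub (Fintype.card_subtype_le P)]

theorem Real.rpow_neg_pow_eq_mul_rpow_neg {a c : ℝ} (ha : 0 < a) {n m w : ℕ}
    (hw : (w : ℝ) = c * (m - n)) : (a ^ (-c)) ^ n = a ^ (-(c * m)) * a ^ w := by
  rw [← Real.rpow_natCast, ← Real.rpow_mul ha.le, ← Real.rpow_natCast a w,
    ← Real.rpow_add ha, hw]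
  ring_nf

theorem SimpleGraph.card_isDiag_map_comp {V X Y : Type*} (G : SimpleGraph V) {f : X → Y}
    (hf : Function.Injective f) (σ : V → X) :
    Nat.card {e : G.edgeSet // (Sym2.map (f ∘ σ) e).IsDiag}
      = Nat.card {e : G.edgeSet // (Sym2.map σ e).IsDiag} := by
  simp only [← Sym2.map_map, Sym2.isDiag_map hf]

section EdgeDifferenceMap

variable {R ι V E : Type*} [CommRing R] [Fintype ι]

def edgeDifferenceMap (orient : E → V × V) : (V → ι → R) →ₗ[R] ((ι → R) × E → R) where
  toFun σ x := x.1 ⬝ᵥ (σ (orient x.2).2 - σ (orient x.2).1)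
  map_add' σ τ := by
    ext x
    simp only [Pi.add_apply, dotProduct_add, dotProduct_sub]
    ring
  map_smul' c σ := by ext x; simp [dotProduct_sub, mul_sub]

theorem edgeDifferenceMap_apply (orient : E → V × V) (σ : V → ι → R) (x : (ι → R) × E) :
    edgeDifferenceMap orient σ x = x.1 ⬝ᵥ (σ (orient x.2).2 - σ (orient x.2).1) := rfl

theorem edgeDifferenceMap_eq_zero_iff (orient : E → V × V) (σ : V → ι → R) :
    edgeDifferenceMap orient σ = 0 ↔ ∀ e, σ (orient e).1 = σ (orient e).2 := by
  simp only [funext_iff, Prod.forall, edgeDifferenceMap_apply, Pi.zero_apply]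
  rw [forall_comm]
  refine forall_congr' fun e => ?_
  simp_rw [dotProduct_comm _ (σ _ - σ _)]
  rw [dotProduct_eq_zero_iff, sub_eq_zero, eq_comm, funext_iff]

theorem card_support_edgeDifferenceMap_mul_card {F : Type*} [Field F] [Fintype F] [Fintype E]
    (orient : E → V × V) (σ : V → ι → F) :
    Nat.card {x // edgeDifferenceMap orient σ x ≠ 0} * Fintype.card F
      = (Fintype.card F - 1) * Fintype.card F ^ Fintype.card ι
          * Nat.card {e // σ (orient e).1 ≠ σ (orient e).2} := by
  classical
  have hedge : ∀ e, Nat.card {α // edgeDifferenceMap orient σ (α, e) ≠ 0} * Fintype.card F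
      = (Fintype.card F - 1) * Fintype.card F ^ Fintype.card ι
          * if σ (orient e).1 ≠ σ (orient e).2 then 1 else 0 := by
    intro e
    split_ifs with he
    · rw [mul_one, ← card_dotProduct_ne_zero_mul_card (sub_ne_zero.mpr (Ne.symm he))]
      rfl
    · push Not at he
      simp [edgeDifferenceMap_apply, he]
  rw [Nat.card_subtype_prod_eq_sum, Finset.sum_mul, Finset.sum_congr rfl fun e _ => hedge e,
    ← Finset.mul_sum, Finset.sum_boole, Nat.card_eq_fintype_card, Fintype.card_subtype]
  rfl

theorem card_ker_edgeDifferenceMap {G : SimpleGraph V} (hG : G.Connected)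
    {orient : G.edgeSet → V × V} (horient : ∀ e, s((orient e).1, (orient e).2) = e) :
    Nat.card (LinearMap.ker (edgeDifferenceMap (ι := ι) (R := R) orient))
      = Nat.card (ι → R) := by
  have hconst : ∀ τ ∈ LinearMap.ker (edgeDifferenceMap (ι := ι) (R := R) orient),
      ∀ u v, τ u = τ v := by
    intro τ hτ
    rw [LinearMap.mem_ker, edgeDifferenceMap_eq_zero_iff] at hτ
    refine hG.preconnected.apply_eq_of_forall_adj_s14 fun u v huv => ?_
    have h := horient ⟨s(u, v), huv⟩
    rw [Sym2.eq_iff] at h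
    rcases h with ⟨hu, hv⟩ | ⟨hv, hu⟩
    · simpa [hu, hv] using hτ ⟨s(u, v), huv⟩
    · simpa [hu, hv] using (hτ ⟨s(u, v), huv⟩).symm
  obtain ⟨v₀⟩ := hG.nonempty
  exact Nat.card_congr
    { toFun := fun τ => τ.1 v₀
      invFun := fun d => ⟨fun _ => d, by simp [edgeDifferenceMap_eq_zero_iff]⟩
      left_inv := fun τ => Subtype.ext (funext fun v => hconst τ.1 τ.2 v₀ v)
      right_inv := fun d => rfl }

theorem cast_card_support_edgeDifferenceMap {K F : Type*} [Field K] [CharZero K] [Field F]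
    [Fintype F] [Fintype E] (orient : E → V × V) (σ : V → ι → F) :
    (Nat.card {x // edgeDifferenceMap orient σ x ≠ 0} : K)
      = (1 - 1 / (Fintype.card F : K)) * Fintype.card F ^ Fintype.card ι
          * (Nat.card E - Nat.card {e // σ (orient e).1 = σ (orient e).2}) := by
  have h := congrArg (Nat.cast : ℕ → K) (card_support_edgeDifferenceMap_mul_card orient σ)
  have hF : (Fintype.card F : K) ≠ 0 := by exact_mod_cast Fintype.card_ne_zero
  push_cast [Nat.cast_sub Fintype.card_pos] at h
  rw [← Nat.cast_card_subtype_not]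
  field_simp
  linear_combination h

end EdgeDifferenceMap

set_option synthInstance.maxSize 256 in
open scoped Classical in
theorem stmt14_general (p : ℕ) [Fact p.Prime] (k : ℕ) (q : ℕ) (hq : q = p ^ k)
    (lam : ℝ) (hlam : lam ∈ Set.Ioo (0 : ℝ) 1)
    (gam : ℝ) (hgam : gam = lam ^ (-((q : ℝ) * ((p : ℝ) - 1)) / (p : ℝ)) - 1)
    {V : Type*} [Fintype V] (G : SimpleGraph V) (hconn : G.Connected)
    (orient : ↥G.edgeSet → V × V)
    (horient : ∀ e : ↥G.edgeSet, s((orient e).1, (orient e).2) = (e : Sym2 V))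
    (Φ : (V → Fin k → ZMod p) → ((Fin k → ZMod p) × ↥G.edgeSet → ZMod p))
    (hΦ : ∀ σ x, Φ σ x = ∑ i, x.1 i * (σ (orient x.2).2 i - σ (orient x.2).1 i)) :
    ∑ σ : V → Fin q,
        (1 + gam) ^ Nat.card {e : ↥G.edgeSet // (Sym2.map σ (e : Sym2 V)).IsDiag}
      = (q : ℝ)
          * lam ^ (-((1 - 1 / (p : ℝ)) * (q : ℝ) * (Nat.card ↥G.edgeSet : ℝ)))
          * ∑ w ∈ {g : (Fin k → ZMod p) × ↥G.edgeSet → ZMod p |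
                ∃ σ, Φ σ = g}.toFinset,
              lam ^ Nat.card {x : (Fin k → ZMod p) × ↥G.edgeSet // w x ≠ 0} := by
  obtain rfl : Φ = edgeDifferenceMap orient := funext₂ hΦ
  set c : ℝ := (1 - 1 / (p : ℝ)) * q with hc
  set mono : (V → Fin k → ZMod p) → ℕ :=
    fun σ => Nat.card {e : G.edgeSet // (Sym2.map σ e).IsDiag} with hmono
  have hcolors : Fintype.card (Fin k → ZMod p) = q := by simp [hq]
  have hdiag (σ : V → Fin k → ZMod p) (e : G.edgeSet) :
      (Sym2.map σ e).IsDiag ↔ σ (orient e).1 = σ (orient e).2 := by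
    rw [← horient e, Sym2.map_mk, Sym2.mk_isDiag_iff]
  have hweight (σ : V → Fin k → ZMod p) :
      (Nat.card {x // edgeDifferenceMap orient σ x ≠ 0} : ℝ)
        = c * (Nat.card G.edgeSet - mono σ) := by
    rw [cast_card_support_edgeDifferenceMap, hmono]
    simp only [hdiag]
    rw [ZMod.card, Fintype.card_fin, hc, hq]
    push_cast
    ring
  have hcode : {g | ∃ σ, edgeDifferenceMap orient σ = g}.toFinset
      = (univ : Finset (V → Fin k → ZMod p)).image (edgeDifferenceMap orient) := by
    ext
    simp
  have h1gam : 1 + gam = lam ^ (-c) := by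
    have hp : (p : ℝ) ≠ 0 := by exact_mod_cast (Fact.out : p.Prime).ne_zero
    rw [hgam, hc, add_sub_cancel]
    congr 1
    field_simp
  let colors : Fin q ≃ (Fin k → ZMod p) :=
    Fintype.equivOfCardEq (by rw [Fintype.card_fin, hcolors])
  calc _ = ∑ σ : V → Fin k → ZMod p, (lam ^ (-c)) ^ mono σ := by
        rw [h1gam]
        exact Fintype.sum_equiv ((Equiv.refl V).arrowCongr colors) _ _ fun σ =>
          congrArg _ (G.card_isDiag_map_comp colors.injective σ).symm
    _ = ∑ σ, lam ^ (-(c * Nat.card G.edgeSet))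
          * lam ^ Nat.card {x // edgeDifferenceMap orient σ x ≠ 0} :=
        sum_congr rfl fun σ _ => Real.rpow_neg_pow_eq_mul_rpow_neg hlam.1 (hweight σ)
    _ = _ := by
        rw [← mul_sum, LinearMap.sum_comp_eq_card_ker_nsmul _
            fun w : (Fin k → ZMod p) × G.edgeSet → ZMod p => lam ^ Nat.card {x // w x ≠ 0},
          card_ker_edgeDifferenceMap hconn horient, hcode, nsmul_eq_mul,
          Nat.card_eq_fintype_card (α := Fin k → ZMod p), hcolors]
        ring

set_option synthInstance.maxSize 256 in
open scoped Classical in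
theorem stmt14 (p : ℕ) [Fact p.Prime] (k : ℕ) (hk : 1 ≤ k) (q : ℕ) (hq : q = p ^ k)
    (lam : ℝ) (hlam : lam ∈ Set.Ioo (0 : ℝ) 1)
    (gam : ℝ) (hgam : gam = lam ^ (-((q : ℝ) * ((p : ℝ) - 1)) / (p : ℝ)) - 1)
    {V : Type*} [Fintype V] (G : SimpleGraph V) (hconn : G.Connected)
    (orient : ↥G.edgeSet → V × V)
    (horient : ∀ e : ↥G.edgeSet, s((orient e).1, (orient e).2) = (e : Sym2 V))
    (Φ : (V → Fin k → ZMod p) → ((Fin k → ZMod p) × ↥G.edgeSet → ZMod p))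
    (hΦ : ∀ σ x, Φ σ x = ∑ i, x.1 i * (σ (orient x.2).2 i - σ (orient x.2).1 i)) :
    ∑ σ : V → Fin q,
        (1 + gam) ^ Nat.card {e : ↥G.edgeSet // (Sym2.map σ (e : Sym2 V)).IsDiag}
      = (q : ℝ)
          * lam ^ (-((1 - 1 / (p : ℝ)) * (q : ℝ) * (Nat.card ↥G.edgeSet : ℝ)))
          * ∑ w ∈ {g : (Fin k → ZMod p) × ↥G.edgeSet → ZMod p |
                ∃ σ, Φ σ = g}.toFinset,
              lam ^ Nat.card {x : (Fin k → ZMod p) × ↥G.edgeSet // w x ≠ 0} :=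
  stmt14_general p k q hq lam hlam gam hgam G hconn orient horient Φ hΦ
end

section
/- Let H be a finite tree and let (c, c') be an edge of H. Let G be a bipartite simple graph with bipartition (V, V'), and let σ be a homomorphism from G to H such that σ(v) is a neighbour of c' in H for every v ∈ V, and σ(v') is a neighbour of c in H for every v' ∈ V'. Then the set I = {v ∈ V : σ(v) ≠ c} ∪ {v' ∈ V' : σ(v') ≠ c'} is an independent set of G. -/
/-!
If an edge `ab` of `G` had `a ∈ S`, `σ a ≠ c` and `b ∉ S`, `σ b ≠ c'`, then `c' – σ a – σ b` and
`c' – c – σ b` would be two distinct paths of length two in the tree `H`.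
-/

namespace SimpleGraph

theorem IsAcyclic.eq_of_adj_of_adj {V : Type*} {H : SimpleGraph V} (hA : H.IsAcyclic)
    {u v x y : V} (hux : H.Adj u x) (hxv : H.Adj x v) (huy : H.Adj u y) (hyv : H.Adj y v)
    (huv : u ≠ v) : x = y := by
  have hpath : ∀ {w : V} (huw : H.Adj u w) (hwv : H.Adj w v),
      (Walk.cons huw (Walk.cons hwv .nil)).IsPath := fun huw hwv => by
    simp [Walk.cons_isPath_iff, huw.ne, hwv.ne, huv]
  have h := (hA.subsingleton_path u v).elim ⟨_, hpath hux hxv⟩ ⟨_, hpath huy hyv⟩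
  simpa using congrArg (fun p : H.Path u v => p.1.snd) h

end SimpleGraph

theorem stmt15_general {α β : Type*} (H : SimpleGraph β) (hT : H.IsTree)
    (c c' : β) (hcc' : H.Adj c c')
    (G : SimpleGraph α) (S : Set α)
    (hbip : ∀ a b : α, G.Adj a b → (a ∈ S ↔ b ∉ S))
    (σ : α → β) (hhom : ∀ a b : α, G.Adj a b → H.Adj (σ a) (σ b))
    (hS : ∀ v ∈ S, H.Adj c' (σ v)) (hS' : ∀ v ∉ S, H.Adj c (σ v)) :
    ∀ a ∈ ({v | v ∈ S ∧ σ v ≠ c} ∪ {v | v ∉ S ∧ σ v ≠ c'} : Set α),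
      ∀ b ∈ ({v | v ∈ S ∧ σ v ≠ c} ∪ {v | v ∉ S ∧ σ v ≠ c'} : Set α),
        ¬ G.Adj a b := by
  have cross : ∀ a b, G.Adj a b → a ∈ S → σ a ≠ c → b ∉ S → σ b ≠ c' → False :=
    fun a b hab haS hac hbS hbc => hac <|
      hT.isAcyclic.eq_of_adj_of_adj (hS a haS) (hhom a b hab) hcc'.symm (hS' b hbS) hbc.symm
  rintro a (⟨haS, hac⟩ | ⟨haS, hac⟩) b (⟨hbS, hbc⟩ | ⟨hbS, hbc⟩) hab
  · exact (hbip a b hab).mp haS hbS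
  · exact cross a b hab haS hac hbS hbc
  · exact cross b a hab.symm hbS hbc haS hac
  · exact haS ((hbip a b hab).mpr hbS)

theorem stmt15 {α β : Type*} [Fintype β] (H : SimpleGraph β) (hT : H.IsTree)
    (c c' : β) (hcc' : H.Adj c c')
    (G : SimpleGraph α) (S : Set α)
    (hbip : ∀ a b : α, G.Adj a b → (a ∈ S ↔ b ∉ S))
    (σ : α → β) (hhom : ∀ a b : α, G.Adj a b → H.Adj (σ a) (σ b))
    (hS : ∀ v ∈ S, H.Adj c' (σ v)) (hS' : ∀ v ∉ S, H.Adj c (σ v)) :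
    ∀ a ∈ ({v | v ∈ S ∧ σ v ≠ c} ∪ {v | v ∉ S ∧ σ v ≠ c'} : Set α),
      ∀ b ∈ ({v | v ∈ S ∧ σ v ≠ c} ∪ {v | v ∉ S ∧ σ v ≠ c'} : Set α),
        ¬ G.Adj a b :=
  stmt15_general H hT c c' hcc' G S hbip σ hhom hS hS'
end
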